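/- arXiv:1601.00063 — 6 statements merged into one kernel-verified Lean document; each statement's English description precedes it below -/
import Mathlib

section
/- Let 𝔅* : L²(ℝ⁵) → L²(ℝ³) denote the Hilbert-space adjoint of the isometric extension of the partial Bargmann transform 𝔅. For every continuous compactly supported function v : ℝ⁵ → ℂ, the integral ∫_{ℝ⁵} φ_{w,ξ,η}(w',z') · v(w,ξ,η) dw dξ dη converges absolutely for every (w',z') ∈ ℝ³, the resulting function of (w',z') belongs to L²(ℝ³), and it equals 𝔅*v as an element of L²(ℝ³). -/
/-!
The partial Bargmann transform is the integral operator with kernel `conj φ_{w,ξ,η}(w',z')`,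
which is jointly continuous. For test functions `u` and continuous compactly supported `v`,
Fubini gives `⟪v, 𝔅u⟫ = ⟪g, u⟫` where `g(w',z') = ∫ φ_{w,ξ,η}(w',z') v(w,ξ,η)`; this `g` is
continuous, so `⟪𝔅*v - g, u⟫ = 0` for all smooth compactly supported `u` forces `𝔅*v = g`
almost everywhere.
-/

open MeasureTheory

noncomputable section

/-- Points of the plane `ℝ²`. -/
abbrev V2 : Type := ℝ × ℝ

/-- The Euclidean dot product on `ℝ²`. -/
def dot2 (a b : V2) : ℝ := a.1 * b.1 + a.2 * b.2

/-- The squared Euclidean norm on `ℝ²`. -/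
def sq2 (a : V2) : ℝ := a.1 ^ 2 + a.2 ^ 2

/-- The wave packet `φ_{w,ξ,η}(w',z') = 2^{-3/2} π^{-2} ⟨η⟩^{1/2}
    exp( iηz' + iξ·(w' − w/2) − ⟨η⟩‖w' − w‖²/2 )`, where `jb` plays the role of `⟨·⟩`. -/
def wp (jb : ℝ → ℝ) (w ξ : V2) (η : ℝ) (w' : V2) (z' : ℝ) : ℂ :=
  (((2 : ℝ) ^ (-(3 : ℝ) / 2) * Real.pi ^ (-(2 : ℝ)) * Real.sqrt (jb η) : ℝ) : ℂ) *
    Complex.exp (Complex.I * (η : ℂ) * (z' : ℂ)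
      + Complex.I * ((dot2 ξ (w' - (1 / 2 : ℝ) • w) : ℝ) : ℂ)
      - ((jb η * sq2 (w' - w) / 2 : ℝ) : ℂ))

/-- The partial Bargmann transform `𝔅u(w,ξ,η) = ∫ conj(φ_{w,ξ,η}(w',z')) u(w',z') dw' dz'`. -/
def pB (jb : ℝ → ℝ) (u : V2 × ℝ → ℂ) : (V2 × V2) × ℝ → ℂ := fun p =>
  ∫ q : V2 × ℝ, (starRingEnd ℂ) (wp jb p.1.1 p.1.2 p.2 q.1 q.2) * u q

end

open ComplexConjugate Function
open scoped ContDiff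

section KernelAdjoint

variable {𝕜 X Y : Type*} [RCLike 𝕜]

theorem HasCompactSupport.mul_fst_snd {M : Type*} [MulZeroClass M] [TopologicalSpace X]
    [TopologicalSpace Y] {u : X → M} {v : Y → M} (hu : HasCompactSupport u)
    (hv : HasCompactSupport v) : HasCompactSupport fun x : X × Y => u x.1 * v x.2 := by
  refine (hu.prod hv).of_isClosed_subset (isClosed_tsupport _)
    (closure_minimal (fun x hx => ?_) ((isClosed_tsupport u).prod (isClosed_tsupport v)))
  exact ⟨subset_tsupport _ (left_ne_zero_of_mul hx), subset_tsupport _ (right_ne_zero_of_mul hx)⟩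

theorem continuous_integral_kernel_mul [TopologicalSpace X] [FirstCountableTopology X]
    [LocallyCompactSpace X] [TopologicalSpace Y] [MeasurableSpace Y]
    [OpensMeasurableSpace Y] {ν : Measure Y} [IsLocallyFiniteMeasure ν] {K : Y → X → 𝕜}
    (hK : Continuous (uncurry K)) {v : Y → 𝕜} (hv : Continuous v) (hvc : HasCompactSupport v) :
    Continuous fun p => ∫ q, K q p * v q ∂ν := by
  have hKv : Continuous (uncurry fun p q => K q p * v q) :=
    (hK.comp continuous_swap).mul (hv.comp continuous_snd)
  convert continuous_parametric_integral_of_continuous (μ := ν) hKv hvc using 2 with p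
  refine (setIntegral_eq_integral_of_forall_compl_eq_zero fun q hq => ?_).symm
  rw [image_eq_zero_of_notMem_tsupport hq, mul_zero]

variable [MeasurableSpace X] [MeasurableSpace Y] {μ : Measure X} {ν : Measure Y}

theorem integral_conj_mul_integral_kernel_comm [SFinite μ] [SFinite ν] {K : Y → X → 𝕜}
    {u : X → 𝕜} {v : Y → 𝕜}
    (h : Integrable (fun x : X × Y => conj (K x.2 x.1 * v x.2) * u x.1) (μ.prod ν)) :
    ∫ q, conj (v q) * ∫ p, conj (K q p) * u p ∂μ ∂ν =
      ∫ p, conj (∫ q, K q p * v q ∂ν) * u p ∂μ := by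
  calc ∫ q, conj (v q) * ∫ p, conj (K q p) * u p ∂μ ∂ν
      = ∫ q, ∫ p, conj (K q p * v q) * u p ∂μ ∂ν := by
        congr 1; funext q
        rw [← integral_const_mul]
        congr 1; funext p
        rw [map_mul]
        ring
    _ = ∫ p, ∫ q, conj (K q p * v q) * u p ∂ν ∂μ := (integral_integral_swap h).symm
    _ = ∫ p, conj (∫ q, K q p * v q ∂ν) * u p ∂μ := by
        congr 1; funext p
        rw [integral_mul_const, integral_conj]

theorem integrable_conj_kernel_mul_prod [TopologicalSpace X] [OpensMeasurableSpace X]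
    [IsFiniteMeasureOnCompacts μ] [SFinite μ] [TopologicalSpace Y] [OpensMeasurableSpace Y]
    [IsFiniteMeasureOnCompacts ν] [SFinite ν] [SecondCountableTopologyEither X Y]
    {K : Y → X → 𝕜} (hK : Continuous (uncurry K)) {u : X → 𝕜} (hu : Continuous u)
    (huc : HasCompactSupport u) {v : Y → 𝕜} (hv : Continuous v) (hvc : HasCompactSupport v) :
    Integrable (fun x : X × Y => conj (K x.2 x.1 * v x.2) * u x.1) (μ.prod ν) := by
  have hsupp : HasCompactSupport fun x : X × Y => conj (K x.2 x.1) * (u x.1 * conj (v x.2)) :=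
    (huc.mul_fst_snd (hvc.comp_left (map_zero conj))).mul_left
  have hfun : (fun x : X × Y => conj (K x.2 x.1 * v x.2) * u x.1) =
      fun x => conj (K x.2 x.1) * (u x.1 * conj (v x.2)) := by
    ext x
    rw [map_mul]
    ring
  refine Continuous.integrable_of_hasCompactSupport ?_ (hfun ▸ hsupp)
  exact (RCLike.continuous_conj.comp ((hK.comp continuous_swap).mul
    (hv.comp continuous_snd))).mul (hu.comp continuous_fst)

theorem ae_eq_of_forall_integral_conj_mul_eq {E : Type*} [NormedAddCommGroup E]
    [NormedSpace ℝ E] [FiniteDimensional ℝ E] [MeasurableSpace E] [BorelSpace E]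
    {μ : Measure E} {f g : E → 𝕜} (hf : LocallyIntegrable f μ) (hg : LocallyIntegrable g μ)
    (h : ∀ u : E → ℝ, ContDiff ℝ ∞ u → HasCompactSupport u →
      ∫ p, conj (f p) * u p ∂μ = ∫ p, conj (g p) * u p ∂μ) :
    f =ᵐ[μ] g := by
  refine ae_eq_of_integral_contDiff_smul_eq hf hg fun u hu huc => ?_
  have := congrArg conj (h u hu huc)
  simpa only [← integral_conj, map_mul, RCLike.conj_conj, RCLike.conj_ofReal,
    RCLike.real_smul_eq_coe_mul, mul_comm] using this

theorem inner_toLp_eq_integral_conj_mul (F : Lp 𝕜 2 μ) {u : X → 𝕜} (hu : MemLp u 2 μ) :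
    inner 𝕜 F (hu.toLp u) = ∫ p, conj (F p) * u p ∂μ := by
  rw [L2.inner_def]
  refine integral_congr_ae ?_
  filter_upwards [hu.coeFn_toLp] with p hp
  rw [RCLike.inner_apply, hp, mul_comm]

theorem adjoint_toLp_ae_eq_integral_kernel [NormedAddCommGroup X] [NormedSpace ℝ X]
    [FiniteDimensional ℝ X] [BorelSpace X] [IsLocallyFiniteMeasure μ]
    [TopologicalSpace Y] [OpensMeasurableSpace Y] [IsLocallyFiniteMeasure ν] [SFinite ν]
    (T : Lp 𝕜 2 μ →L[𝕜] Lp 𝕜 2 ν) {K : Y → X → 𝕜} (hK : Continuous (uncurry K))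
    (hT : ∀ u : X → 𝕜, Continuous u → HasCompactSupport u → ∀ hu : MemLp u 2 μ,
      ⇑(T (hu.toLp u)) =ᵐ[ν] fun q => ∫ p, conj (K q p) * u p ∂μ)
    {v : Y → 𝕜} (hv : Continuous v) (hvc : HasCompactSupport v) (hv2 : MemLp v 2 ν) :
    ⇑(T.adjoint (hv2.toLp v)) =ᵐ[μ] fun p => ∫ q, K q p * v q ∂ν := by
  have hg : Continuous fun p => ∫ q, K q p * v q ∂ν := continuous_integral_kernel_mul hK hv hvc
  refine ae_eq_of_forall_integral_conj_mul_eq ((Lp.memLp _).locallyIntegrable one_le_two)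
    hg.locallyIntegrable fun u₀ hu₀ hu₀c => ?_
  set u : X → 𝕜 := fun p => u₀ p
  have hu : Continuous u := RCLike.continuous_ofReal.comp hu₀.continuous
  have huc : HasCompactSupport u := hu₀c.comp_left RCLike.ofReal_zero
  have hu2 : MemLp u 2 μ := hu.memLp_of_hasCompactSupport huc
  calc ∫ p, conj (T.adjoint (hv2.toLp v) p) * u p ∂μ
      = inner 𝕜 (T.adjoint (hv2.toLp v)) (hu2.toLp u) :=
        (inner_toLp_eq_integral_conj_mul _ hu2).symm
    _ = inner 𝕜 (hv2.toLp v) (T (hu2.toLp u)) := T.adjoint_inner_left _ _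
    _ = ∫ q, conj (v q) * ∫ p, conj (K q p) * u p ∂μ ∂ν := by
        rw [L2.inner_def]
        refine integral_congr_ae ?_
        filter_upwards [hv2.coeFn_toLp, hT u hu huc hu2] with q hvq hTq
        rw [RCLike.inner_apply, hvq, hTq, mul_comm]
    _ = ∫ p, conj (∫ q, K q p * v q ∂ν) * u p ∂μ :=
        integral_conj_mul_integral_kernel_comm (integrable_conj_kernel_mul_prod hK hu huc hv hvc)

end KernelAdjoint

theorem continuous_uncurry_wp {jb : ℝ → ℝ} (hjb : Continuous jb) :
    Continuous (uncurry fun (q : (V2 × V2) × ℝ) (p : V2 × ℝ) =>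
      wp jb q.1.1 q.1.2 q.2 p.1 p.2) := by
  unfold uncurry wp dot2 sq2
  fun_prop

theorem partial_bargmann_adjoint_general
    (jb : ℝ → ℝ) (hjb_cont : Continuous jb)
    (B : Lp ℂ 2 (volume : Measure (V2 × ℝ)) →ₗᵢ[ℂ]
      Lp ℂ 2 (volume : Measure ((V2 × V2) × ℝ)))
    (hB : ∀ (u : V2 × ℝ → ℂ), Continuous u → HasCompactSupport u →
      ∀ hu2 : MemLp u 2 (volume : Measure (V2 × ℝ)),
        ⇑(B (hu2.toLp u)) =ᵐ[volume] pB jb u)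
    (v : (V2 × V2) × ℝ → ℂ) (hv : Continuous v) (hvc : HasCompactSupport v)
    (hv2 : MemLp v 2 (volume : Measure ((V2 × V2) × ℝ))) :
    (∀ p : V2 × ℝ,
      Integrable (fun q : (V2 × V2) × ℝ => wp jb q.1.1 q.1.2 q.2 p.1 p.2 * v q) volume) ∧
    MemLp (fun p : V2 × ℝ => ∫ q : (V2 × V2) × ℝ, wp jb q.1.1 q.1.2 q.2 p.1 p.2 * v q)
      2 (volume : Measure (V2 × ℝ)) ∧
    ⇑((ContinuousLinearMap.adjoint B.toContinuousLinearMap) (hv2.toLp v)) =ᵐ[volume]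
      fun p : V2 × ℝ => ∫ q : (V2 × V2) × ℝ, wp jb q.1.1 q.1.2 q.2 p.1 p.2 * v q := by
  have hK := continuous_uncurry_wp hjb_cont
  have hadj := adjoint_toLp_ae_eq_integral_kernel B.toContinuousLinearMap hK hB hv hvc hv2
  refine ⟨fun p => ?_, (Lp.memLp _).ae_eq hadj, hadj⟩
  exact ((hK.comp (Continuous.prodMk_left p)).mul hv).integrable_of_hasCompactSupport
    hvc.mul_left

/-- Let `𝔅*` be the Hilbert-space adjoint of the isometric extension `B` of
the partial Bargmann transform. For every continuous compactly supported `v : ℝ⁵ → ℂ`, the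
integral `∫ φ_{w,ξ,η}(w',z') v(w,ξ,η) dw dξ dη` converges absolutely for every `(w',z')`, the
resulting function belongs to `L²(ℝ³)`, and it equals `𝔅*v` as an element of `L²(ℝ³)`. -/
theorem partial_bargmann_adjoint
    (jb : ℝ → ℝ) (hjb_cont : Continuous jb)
    (hjb_eq : ∀ s : ℝ, 2 ≤ |s| → jb s = |s|)
    (hjb_one : ∀ s : ℝ, 1 ≤ jb s)
    (B : Lp ℂ 2 (volume : Measure (V2 × ℝ)) →ₗᵢ[ℂ]
      Lp ℂ 2 (volume : Measure ((V2 × V2) × ℝ)))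
    (hB : ∀ (u : V2 × ℝ → ℂ), Continuous u → HasCompactSupport u →
      ∀ hu2 : MemLp u 2 (volume : Measure (V2 × ℝ)),
        ⇑(B (hu2.toLp u)) =ᵐ[volume] pB jb u)
    (v : (V2 × V2) × ℝ → ℂ) (hv : Continuous v) (hvc : HasCompactSupport v)
    (hv2 : MemLp v 2 (volume : Measure ((V2 × V2) × ℝ))) :
    (∀ p : V2 × ℝ,
      Integrable (fun q : (V2 × V2) × ℝ => wp jb q.1.1 q.1.2 q.2 p.1 p.2 * v q) volume) ∧
    MemLp (fun p : V2 × ℝ => ∫ q : (V2 × V2) × ℝ, wp jb q.1.1 q.1.2 q.2 p.1 p.2 * v q)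
      2 (volume : Measure (V2 × ℝ)) ∧
    ⇑((ContinuousLinearMap.adjoint B.toContinuousLinearMap) (hv2.toLp v)) =ᵐ[volume]
      fun p : V2 × ℝ => ∫ q : (V2 × V2) × ℝ, wp jb q.1.1 q.1.2 q.2 p.1 p.2 * v q :=
  partial_bargmann_adjoint_general jb hjb_cont B hB v hv hvc hv2
end

section
/- Let 𝔓 := 𝔅 ∘ 𝔅* : L²(ℝ⁵) → L²(ℝ⁵), where 𝔅* is the Hilbert-space adjoint of the isometric extension of the partial Bargmann transform 𝔅. Then 𝔓 acts fiberwise in the variable η: for every v ∈ L²(ℝ⁵) and every measurable set S ⊆ ℝ, if v(w,ξ,η) = 0 for almost every (w,ξ,η) with η ∉ S, then also (𝔓v)(w,ξ,η) = 0 for almost every (w,ξ,η) with η ∉ S. -/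
/-!
Write `P = B B†`. Translating `u` in `z'` multiplies `B u` by the character `e^{iaη}`, so the closed
range `K` of `B` is invariant under all such modulations. If `y ⊥ K` and `z ∈ K`, the fibre
integral `η ↦ ∫ conj y · z` therefore has vanishing Fourier transform and vanishes a.e., so `K`
is also invariant under the cut-off `M` to the band `{η ∉ S}`. As `M` is an orthogonal projection
and `P` acts as the identity against `K`, `‖M P v‖² = ⟪P v, M P v⟫ = ⟪v, M P v⟫ = ⟪M v, P v⟫ = 0`.
-/

open MeasureTheory

noncomputable section

open Complex
open scoped InnerProductSpace ENNReal FourierTransform SchwartzMap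

section Hilbert

variable {𝕜 E F : Type*} [RCLike 𝕜] [NormedAddCommGroup E] [InnerProductSpace 𝕜 E]
  [CompleteSpace E] [NormedAddCommGroup F] [InnerProductSpace 𝕜 F] [CompleteSpace F]

theorem LinearIsometry.inner_comp_adjoint_apply_of_mem_topologicalClosure (B : E →ₗᵢ[𝕜] F)
    (v : F) {w : F} (hw : w ∈ (LinearMap.range B.toLinearMap).topologicalClosure) :
    ⟪(B.toContinuousLinearMap ∘L B.toContinuousLinearMap.adjoint) v, w⟫_𝕜 = ⟪v, w⟫_𝕜 := by
  rw [← SetLike.mem_coe, Submodule.topologicalClosure_coe] at hw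
  refine closure_minimal ?_ (isClosed_eq (by fun_prop) (by fun_prop)) hw
  rintro _ ⟨x, rfl⟩
  exact (B.inner_map_map _ x).trans (B.toContinuousLinearMap.adjoint_inner_left x v)

theorem IsStarProjection.apply_comp_adjoint_apply_eq_zero {M : F →L[𝕜] F}
    (hM : IsStarProjection M) (B : E →ₗᵢ[𝕜] F)
    (hMB : ∀ x, M (B x) ∈ (LinearMap.range B.toLinearMap).topologicalClosure)
    {v : F} (hv : M v = 0) :
    M ((B.toContinuousLinearMap ∘L B.toContinuousLinearMap.adjoint) v) = 0 := by
  set P := B.toContinuousLinearMap ∘L B.toContinuousLinearMap.adjoint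
  set w := M (P v)
  have hMw : M w = w := congr($(hM.isIdempotentElem.eq) (P v))
  have hsymm : (M : F →ₗ[𝕜] F).IsSymmetric := hM.isSelfAdjoint.isSymmetric
  refine inner_self_eq_zero (𝕜 := 𝕜) |>.mp ?_
  calc ⟪w, w⟫_𝕜 = ⟪P v, M w⟫_𝕜 := hsymm _ _
    _ = ⟪v, w⟫_𝕜 := by
      rw [hMw]; exact B.inner_comp_adjoint_apply_of_mem_topologicalClosure v (hMB _)
    _ = ⟪M v, P v⟫_𝕜 := (hsymm _ _).symm
    _ = 0 := by rw [hv, inner_zero_left]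

end Hilbert

theorem MeasureTheory.Integrable.ae_eq_zero_of_fourier_eq_zero
    {V F : Type*} [NormedAddCommGroup V] [InnerProductSpace ℝ V] [FiniteDimensional ℝ V]
    [MeasurableSpace V] [BorelSpace V] [NormedAddCommGroup F] [NormedSpace ℂ F] [CompleteSpace F]
    {f : V → F} (hf : Integrable f) (hFf : 𝓕 f = 0) : f =ᵐ[volume] 0 := by
  refine ae_eq_zero_of_integral_contDiff_smul_eq_zero hf.locallyIntegrable fun g hg hgs => ?_
  let G : 𝓢(V, ℂ) := (hgs.comp_left (g := ofRealCLM) (map_zero _)).toSchwartzMap (by fun_prop)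
  let ψ : 𝓢(V, ℂ) := 𝓕⁻ G
  have hψ : 𝓕 (ψ : V → ℂ) = fun x => (g x : ℂ) := by
    rw [← SchwartzMap.fourier_coe]
    exact congrArg DFunLike.coe (FourierInvPair.fourier_fourierInv_eq G)
  calc ∫ x, g x • f x = ∫ x, 𝓕 (ψ : V → ℂ) x • f x := by
        simp_rw [hψ, Complex.coe_smul]
    _ = ∫ x, ψ x • 𝓕 f x := by
        simpa using! VectorFourier.integral_fourierIntegral_smul_eq_flip (L := innerₗ V)
          Real.continuous_fourierChar continuous_inner ψ.integrable hf
    _ = 0 := by simp [hFf]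

section Fiber

variable {α F : Type*} [MeasurableSpace α] {μ : Measure α}
  [NormedAddCommGroup F] [NormedSpace ℂ F]

theorem MeasureTheory.Integrable.integrable_cexp_mul_snd_smul {g : α × ℝ → F}
    (hg : Integrable g (μ.prod volume)) (a : ℝ) :
    Integrable (fun p => cexp (↑(a * p.2) * I) • g p) (μ.prod volume) :=
  hg.bdd_smul 1 (by fun_prop) (.of_forall fun _ => (norm_exp_ofReal_mul_I _).le)

theorem MeasureTheory.Integrable.setIntegral_snd_preimage_eq_zero [SFinite μ] [CompleteSpace F]
    {g : α × ℝ → F} (hg : Integrable g (μ.prod volume))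
    (hmod : ∀ a : ℝ, ∫ p, cexp (↑(a * p.2) * I) • g p ∂(μ.prod volume) = 0) (T : Set ℝ) :
    ∫ p in Prod.snd ⁻¹' T, g p ∂(μ.prod volume) = 0 := by
  set h : ℝ → F := fun η => ∫ x, g (x, η) ∂μ
  have hF : 𝓕 h = 0 := by
    ext t
    rw [Real.fourier_real_eq_integral_exp_smul, Pi.zero_apply, ← hmod (-2 * Real.pi * t),
      integral_prod_symm _ (hg.integrable_cexp_mul_snd_smul _)]
    refine integral_congr_ae (.of_forall fun η => ?_)
    simp only [h, mul_right_comm _ η t]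
    exact (MeasureTheory.integral_smul _ _).symm
  have hh : h =ᵐ[volume] 0 := hg.integral_prod_right.ae_eq_zero_of_fourier_eq_zero hF
  have hgT : Integrable g (μ.prod (volume.restrict T)) := by
    rw [← Measure.restrict_univ (μ := μ), Measure.prod_restrict]
    exact hg.integrableOn
  rw [← Set.univ_prod, ← Measure.prod_restrict, Measure.restrict_univ, integral_prod_symm _ hgT]
  exact integral_eq_zero_of_ae (ae_restrict_of_ae hh)

end Fiber

namespace MeasureTheory.Lp

variable {α E 𝕜 : Type*} {m : MeasurableSpace α} {μ : Measure α} {p : ℝ≥0∞} {s : Set α}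

section Dense

variable [TopologicalSpace α] [NormalSpace α] [R1Space α] [WeaklyLocallyCompactSpace α]
  [BorelSpace α] [μ.Regular] [NormedAddCommGroup E] [NormedSpace ℝ E] [Fact (1 ≤ p)]

theorem dense_setOf_continuous_hasCompactSupport (hp : p ≠ ∞) :
    Dense {f : Lp E p μ | ∃ u : α → E, Continuous u ∧ HasCompactSupport u ∧ f =ᵐ[μ] u} := by
  refine fun f => Metric.mem_closure_iff.2 fun ε hε => ?_
  obtain ⟨u, hus, hfu, huc, hu⟩ := (Lp.memLp f).exists_hasCompactSupport_eLpNorm_sub_le hp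
    (ENNReal.ofReal_pos.2 (half_pos hε)).ne'
  refine ⟨hu.toLp u, ⟨u, huc, hus, hu.coeFn_toLp⟩, ?_⟩
  rw [Lp.dist_def, eLpNorm_congr_ae (ae_eq_rfl.sub hu.coeFn_toLp)]
  calc (eLpNorm (⇑f - u) p μ).toReal ≤ (ENNReal.ofReal (ε / 2)).toReal :=
        ENNReal.toReal_mono ENNReal.ofReal_ne_top hfu
    _ < ε := by rw [ENNReal.toReal_ofReal (half_pos hε).le]; exact half_lt_self hε

end Dense

section Normed

variable (𝕜) [NormedField 𝕜] [NormedAddCommGroup E] [NormedSpace 𝕜 E] [Fact (1 ≤ p)]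

def indicatorCLM (hs : MeasurableSet s) : Lp E p μ →L[𝕜] Lp E p μ :=
  LinearMap.mkContinuous
    { toFun f := ((Lp.memLp f).indicator hs).toLp (s.indicator f)
      map_add' f g := by
        rw [← MemLp.toLp_add]
        refine MemLp.toLp_congr _ _ ?_
        filter_upwards [Lp.coeFn_add f g] with x hx
        by_cases hxs : x ∈ s
        · simp only [Pi.add_apply, Set.indicator_of_mem hxs]; exact hx
        · simp [Set.indicator_of_notMem hxs]
      map_smul' c f := by
        rw [← MemLp.toLp_const_smul]
        refine MemLp.toLp_congr _ _ ?_
        filter_upwards [Lp.coeFn_smul c f] with x hx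
        by_cases hxs : x ∈ s
        · simp only [Pi.smul_apply, Set.indicator_of_mem hxs, RingHom.id_apply]; exact hx
        · simp [Set.indicator_of_notMem hxs] }
    1 fun f => by
      change ‖((Lp.memLp f).indicator hs).toLp _‖ ≤ 1 * ‖f‖
      rw [one_mul, Lp.norm_toLp, Lp.norm_def]
      exact ENNReal.toReal_mono (Lp.eLpNorm_ne_top f) (eLpNorm_indicator_le _)

theorem coeFn_indicatorCLM (hs : MeasurableSet s) (f : Lp E p μ) :
    indicatorCLM 𝕜 hs f =ᵐ[μ] s.indicator f :=
  ((Lp.memLp f).indicator hs).coeFn_toLp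

variable {𝕜} in
theorem indicatorCLM_eq_zero_iff (hs : MeasurableSet s) {f : Lp E p μ} :
    indicatorCLM 𝕜 hs f = 0 ↔ ∀ᵐ x ∂μ, x ∈ s → f x = 0 := by
  have h : ∀ᵐ x ∂μ, indicatorCLM 𝕜 hs f x = 0 ↔ (x ∈ s → f x = 0) := by
    filter_upwards [coeFn_indicatorCLM 𝕜 hs f] with x hx
    rw [hx, Set.indicator_apply_eq_zero]
  rw [Lp.eq_zero_iff_ae_eq_zero, Filter.EventuallyEq, ← Filter.eventually_congr h]
  rfl

end Normed

section Inner

variable [RCLike 𝕜] [NormedAddCommGroup E] [InnerProductSpace 𝕜 E]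

theorem inner_indicatorCLM_right (hs : MeasurableSet s) (f g : Lp E 2 μ) :
    ⟪f, indicatorCLM 𝕜 hs g⟫_𝕜 = ∫ x in s, ⟪f x, g x⟫_𝕜 ∂μ := by
  rw [L2.inner_def, ← integral_indicator hs]
  refine integral_congr_ae ?_
  filter_upwards [coeFn_indicatorCLM 𝕜 hs g] with x hx
  by_cases hxs : x ∈ s <;> simp [hx, hxs]

theorem isStarProjection_indicatorCLM [CompleteSpace E] (hs : MeasurableSet s) :
    IsStarProjection (indicatorCLM 𝕜 hs : Lp E 2 μ →L[𝕜] Lp E 2 μ) := by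
  refine ⟨ContinuousLinearMap.ext fun f => Lp.ext ?_,
    ContinuousLinearMap.isSelfAdjoint_iff_isSymmetric.mpr fun f g => ?_⟩
  · filter_upwards [coeFn_indicatorCLM 𝕜 hs (indicatorCLM 𝕜 hs f),
      coeFn_indicatorCLM 𝕜 hs f] with x hx hx'
    by_cases hxs : x ∈ s <;> simp [hx, hx', hxs]
  · rw [ContinuousLinearMap.coe_coe, inner_indicatorCLM_right, ← inner_conj_symm,
      inner_indicatorCLM_right, ← integral_conj]
    simp

end Inner

section Modulation

variable [SFinite μ] [NormedAddCommGroup E] [InnerProductSpace ℂ E] [CompleteSpace E]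

theorem indicatorCLM_snd_preimage_mem {K : Submodule ℂ (Lp E 2 (μ.prod volume))}
    (hK : IsClosed (K : Set (Lp E 2 (μ.prod (volume : Measure ℝ)))))
    {T : Set ℝ} (hT : MeasurableSet T) {z : Lp E 2 (μ.prod volume)}
    (hz : ∀ a : ℝ, ∃ z' ∈ K, z' =ᵐ[μ.prod volume] fun p => cexp (↑(a * p.2) * I) • z p) :
    indicatorCLM ℂ (measurable_snd hT) z ∈ K := by
  have : CompleteSpace K := hK.completeSpace_coe
  rw [← K.orthogonal_orthogonal, Submodule.mem_orthogonal]
  intro y hy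
  rw [inner_indicatorCLM_right]
  refine (L2.integrable_inner y z).setIntegral_snd_preimage_eq_zero (fun a => ?_) T
  obtain ⟨z', hz'K, hz'⟩ := hz a
  rw [← Submodule.inner_left_of_mem_orthogonal hz'K hy, L2.inner_def]
  refine integral_congr_ae ?_
  filter_upwards [hz'] with p hp
  rw [hp, inner_smul_right, smul_eq_mul]

end Modulation

end MeasureTheory.Lp

theorem wp_add (jb : ℝ → ℝ) (w ξ : V2) (η : ℝ) (w' : V2) (z' a : ℝ) :
    wp jb w ξ η w' (z' + a) = cexp (↑(η * a) * I) * wp jb w ξ η w' z' := by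
  rw [wp, wp, mul_left_comm, ← Complex.exp_add]
  congr 2
  push_cast
  ring

theorem pB_comp_add_snd (jb : ℝ → ℝ) (u : V2 × ℝ → ℂ) (a : ℝ) (p : (V2 × V2) × ℝ) :
    pB jb (fun q => u (q.1, q.2 + a)) p = cexp (↑(a * p.2) * I) * pB jb u p := by
  rw [pB, pB, ← integral_const_mul, Measure.volume_eq_prod,
    ← integral_add_right_eq_self _ ((0 : V2), -a)]
  refine integral_congr_ae (.of_forall fun q => ?_)
  simp only [Prod.fst_add, Prod.snd_add, add_zero, neg_add_cancel_right, wp_add, map_mul,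
    ← Complex.exp_conj, conj_ofReal, conj_I]
  rw [← mul_assoc]
  congr 3
  push_cast
  ring

theorem indicatorCLM_snd_preimage_mem_topologicalClosure_range (jb : ℝ → ℝ)
    (B : Lp ℂ 2 (volume : Measure (V2 × ℝ)) →ₗᵢ[ℂ]
      Lp ℂ 2 (volume : Measure ((V2 × V2) × ℝ)))
    (hB : ∀ (u : V2 × ℝ → ℂ), Continuous u → HasCompactSupport u →
      ∀ hu2 : MemLp u 2 (volume : Measure (V2 × ℝ)),
        ⇑(B (hu2.toLp u)) =ᵐ[volume] pB jb u)
    {T : Set ℝ} (hT : MeasurableSet T) (x : Lp ℂ 2 (volume : Measure (V2 × ℝ))) :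
    Lp.indicatorCLM ℂ (measurable_snd hT) (B x) ∈
      (LinearMap.range B.toLinearMap).topologicalClosure := by
  set K := (LinearMap.range B.toLinearMap).topologicalClosure
  have hK : IsClosed (K : Set (Lp ℂ 2 (volume : Measure ((V2 × V2) × ℝ)))) :=
    Submodule.isClosed_topologicalClosure _
  refine (Lp.dense_setOf_continuous_hasCompactSupport (p := 2) ENNReal.ofNat_ne_top).induction ?_
    (hK.preimage (by fun_prop)) x
  rintro f ⟨u, hu, hus, hfu⟩
  have hu2 : MemLp u 2 volume := (Lp.memLp f).ae_eq hfu
  obtain rfl : f = hu2.toLp u :=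
    (Lp.toLp_coeFn f (Lp.memLp f)).symm.trans (MemLp.toLp_congr _ hu2 hfu)
  refine Lp.indicatorCLM_snd_preimage_mem hK hT fun a => ?_
  have hua : Continuous fun q : V2 × ℝ => u (q.1, q.2 + a) := by fun_prop
  have huas : HasCompactSupport fun q : V2 × ℝ => u (q.1, q.2 + a) :=
    hus.comp_homeomorph ((Homeomorph.refl V2).prodCongr (Homeomorph.addRight a))
  refine ⟨B ((hua.memLp_of_hasCompactSupport huas).toLp _),
    Submodule.le_topologicalClosure _ (LinearMap.mem_range_self _ _), ?_⟩
  filter_upwards [hB _ hua huas _, hB u hu hus hu2] with p h1 h2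
  rw [h1, pB_comp_add_snd, h2, smul_eq_mul]

theorem bargmann_projector_fiberwise_general
    (jb : ℝ → ℝ)
    (B : Lp ℂ 2 (volume : Measure (V2 × ℝ)) →ₗᵢ[ℂ]
      Lp ℂ 2 (volume : Measure ((V2 × V2) × ℝ)))
    (hB : ∀ (u : V2 × ℝ → ℂ), Continuous u → HasCompactSupport u →
      ∀ hu2 : MemLp u 2 (volume : Measure (V2 × ℝ)),
        ⇑(B (hu2.toLp u)) =ᵐ[volume] pB jb u)
    (v : Lp ℂ 2 (volume : Measure ((V2 × V2) × ℝ)))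
    (S : Set ℝ) (hS : MeasurableSet S)
    (hv : ∀ᵐ p : (V2 × V2) × ℝ ∂volume, p.2 ∉ S → v p = 0) :
    ∀ᵐ p : (V2 × V2) × ℝ ∂volume, p.2 ∉ S →
      ⇑((B.toContinuousLinearMap ∘L
          ContinuousLinearMap.adjoint B.toContinuousLinearMap) v) p = 0 := by
  have hband : MeasurableSet (Prod.snd ⁻¹' Sᶜ : Set ((V2 × V2) × ℝ)) := measurable_snd hS.compl
  refine (Lp.indicatorCLM_eq_zero_iff (𝕜 := ℂ) hband).1 ?_
  refine (Lp.isStarProjection_indicatorCLM hband).apply_comp_adjoint_apply_eq_zero B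
    (indicatorCLM_snd_preimage_mem_topologicalClosure_range jb B hB hS.compl) ?_
  exact (Lp.indicatorCLM_eq_zero_iff hband).2 hv

/-- The projector `𝔓 := 𝔅 ∘ 𝔅*` acts fiberwise in `η`: if `v ∈ L²(ℝ⁵)`
vanishes almost everywhere on `{(w,ξ,η) : η ∉ S}` for a measurable `S ⊆ ℝ`, then so does
`𝔓v`. -/
theorem bargmann_projector_fiberwise
    (jb : ℝ → ℝ) (hjb_cont : Continuous jb)
    (hjb_eq : ∀ s : ℝ, 2 ≤ |s| → jb s = |s|)
    (hjb_one : ∀ s : ℝ, 1 ≤ jb s)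
    (B : Lp ℂ 2 (volume : Measure (V2 × ℝ)) →ₗᵢ[ℂ]
      Lp ℂ 2 (volume : Measure ((V2 × V2) × ℝ)))
    (hB : ∀ (u : V2 × ℝ → ℂ), Continuous u → HasCompactSupport u →
      ∀ hu2 : MemLp u 2 (volume : Measure (V2 × ℝ)),
        ⇑(B (hu2.toLp u)) =ᵐ[volume] pB jb u)
    (v : Lp ℂ 2 (volume : Measure ((V2 × V2) × ℝ)))
    (S : Set ℝ) (hS : MeasurableSet S)
    (hv : ∀ᵐ p : (V2 × V2) × ℝ ∂volume, p.2 ∉ S → v p = 0) :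
    ∀ᵐ p : (V2 × V2) × ℝ ∂volume, p.2 ∉ S →
      ⇑((B.toContinuousLinearMap ∘L
          ContinuousLinearMap.adjoint B.toContinuousLinearMap) v) p = 0 :=
  bargmann_projector_fiberwise_general jb B hB v S hS hv

end
end

section
/- (Regularized integration by parts.) Let ρ : ℝ → ℝ be a C^∞ function supported on [−1,1] with ∫ρ(s) ds = 1. Let ϑ : ℝ → ℝ be a C² function and let g : ℝ → ℂ be continuous with compact support. Assume that ϑ'(s) ≠ 0 for all s in a neighborhood of the support of g. Then for all sufficiently small ε > 0 one has ∫ e^{iϑ(s)} g(s) ds = i ∫ e^{iϑ(s)} (g_ε/ϑ')'(s) ds + ∫ e^{iϑ(s)} (g(s) − g_ε(s)) ds, where g_ε := ρ_ε * g with ρ_ε(s) := ε^{-1} ρ(ε^{-1}s). -/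
/-!
Differentiating `e^{iϑ} · (g_ε / ϑ')`, which is `C¹` with compact support, and integrating gives
`0 = i ∫ e^{iϑ} g_ε + ∫ e^{iϑ} (g_ε / ϑ')'`, since `ϑ' · (g_ε / ϑ') = g_ε` wherever `g_ε ≠ 0`.
The mollification is only there to make `g_ε` a `C¹` function; its support lies in the
`ε`-neighbourhood of `supp g`, hence, for `ε` small, in the region where `ϑ'` does not vanish.
The remaining term `∫ e^{iϑ} (g − g_ε)` is just the difference of the two integrals.
-/

open MeasureTheory Metric Set Complex Function
open scoped Convolution

theorem ContDiff.div_of_ne_zero_on_tsupport {𝕜 𝕜' E : Type*} [NontriviallyNormedField 𝕜]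
    [NormedAddCommGroup E] [NormedSpace 𝕜 E] [NormedField 𝕜'] [NormedAlgebra 𝕜 𝕜']
    {n : WithTop ℕ∞} {f d : E → 𝕜'} (hf : ContDiff 𝕜 n f) (hd : ContDiff 𝕜 n d)
    (hd₀ : ∀ x ∈ tsupport f, d x ≠ 0) :
    ContDiff 𝕜 n fun x => f x / d x := by
  rw [contDiff_iff_contDiffAt]
  intro x
  by_cases hx : x ∈ tsupport f
  · simpa only [div_eq_mul_inv] using hf.contDiffAt.mul (hd.contDiffAt.fun_inv (hd₀ x hx))
  · have hzero : (fun x => f x / d x) =ᶠ[nhds x] fun _ => 0 := by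
      filter_upwards [notMem_tsupport_iff_eventuallyEq.mp hx] with y hy
      simp [hy]
    exact contDiffAt_const.congr_of_eventuallyEq hzero

theorem integrable_exp_mul {ϑ : ℝ → ℝ} (hϑ : Continuous ϑ) {f : ℝ → ℂ} (hf : Continuous f)
    (hfc : HasCompactSupport f) : Integrable fun s => exp (I * ϑ s) * f s :=
  (by fun_prop : Continuous fun s => exp (I * ϑ s) * f s).integrable_of_hasCompactSupport
    hfc.mul_left

theorem integral_exp_mul_deriv_mul {ϑ : ℝ → ℝ} (hϑ : ContDiff ℝ 1 ϑ) {h : ℝ → ℂ}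
    (hh : ContDiff ℝ 1 h) (hhc : HasCompactSupport h) :
    ∫ s, exp (I * ϑ s) * (deriv ϑ s * h s) = I * ∫ s, exp (I * ϑ s) * deriv h s := by
  have hderiv : ∀ s, HasDerivAt (fun s => exp (I * ϑ s) * h s)
      (I * (exp (I * ϑ s) * (deriv ϑ s * h s)) + exp (I * ϑ s) * deriv h s) s := fun s =>
    ((((hϑ.differentiable one_ne_zero s).hasDerivAt.ofReal_comp.const_mul I).cexp).fun_mul
      (hh.differentiable one_ne_zero s).hasDerivAt).congr_deriv (by ring)
  have hint₁ : Integrable fun s => exp (I * ϑ s) * (deriv ϑ s * h s) :=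
    integrable_exp_mul hϑ.continuous
      ((continuous_ofReal.comp (hϑ.continuous_deriv le_rfl)).mul hh.continuous) hhc.mul_left
  have hint₂ : Integrable fun s => exp (I * ϑ s) * deriv h s :=
    integrable_exp_mul hϑ.continuous (hh.continuous_deriv le_rfl) hhc.deriv
  have hzero := integral_eq_zero_of_hasDerivAt_of_integrable hderiv
    ((hint₁.const_mul I).add hint₂) (integrable_exp_mul hϑ.continuous hh.continuous hhc)
  rw [integral_add (hint₁.const_mul I) hint₂, integral_const_mul] at hzero
  linear_combination (-I) * hzero + (∫ s, exp (I * ϑ s) * (deriv ϑ s * h s)) * I_mul_I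

theorem integral_exp_mul_eq_I_mul_integral_deriv_div {ϑ : ℝ → ℝ} (hϑ : ContDiff ℝ 2 ϑ)
    {f : ℝ → ℂ} (hf : ContDiff ℝ 1 f) (hfc : HasCompactSupport f)
    (hϑ₀ : ∀ s ∈ tsupport f, deriv ϑ s ≠ 0) :
    ∫ s, exp (I * ϑ s) * f s = I * ∫ s, exp (I * ϑ s) * deriv (fun s => f s / deriv ϑ s) s := by
  have hdiv : ContDiff ℝ 1 fun s => f s / deriv ϑ s :=
    hf.div_of_ne_zero_on_tsupport (ofRealCLM.contDiff.comp (hϑ.deriv' (n := 1)))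
      (fun s hs => ofReal_ne_zero.mpr (hϑ₀ s hs))
  rw [← integral_exp_mul_deriv_mul (hϑ.of_le one_le_two) hdiv
    (hfc.mono fun s hs => (div_ne_zero_iff.mp hs).1)]
  congr with s
  by_cases hs : f s = 0
  · simp [hs]
  · rw [mul_div_cancel₀ _ (ofReal_ne_zero.mpr (hϑ₀ s (subset_tsupport f hs)))]

theorem integral_exp_mul_eq_I_mul_integral_deriv_div_add {ϑ : ℝ → ℝ} (hϑ : ContDiff ℝ 2 ϑ)
    {g f : ℝ → ℂ} (hg : Continuous g) (hgc : HasCompactSupport g) (hf : ContDiff ℝ 1 f)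
    (hfc : HasCompactSupport f) (hϑ₀ : ∀ s ∈ tsupport f, deriv ϑ s ≠ 0) :
    ∫ s, exp (I * ϑ s) * g s =
      I * (∫ s, exp (I * ϑ s) * deriv (fun s => f s / deriv ϑ s) s) +
        ∫ s, exp (I * ϑ s) * (g s - f s) := by
  simp_rw [← integral_exp_mul_eq_I_mul_integral_deriv_div hϑ hf hfc hϑ₀, mul_sub]
  rw [integral_sub (integrable_exp_mul hϑ.continuous hg hgc)
    (integrable_exp_mul hϑ.continuous hf.continuous hfc), add_sub_cancel]

theorem tsupport_convolution_subset_cthickening {𝕜 G E E' F : Type*} [NontriviallyNormedField 𝕜]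
    [NormedAddCommGroup E] [NormedAddCommGroup E'] [NormedAddCommGroup F] [NormedSpace 𝕜 E]
    [NormedSpace 𝕜 E'] [NormedSpace 𝕜 F] [NormedSpace ℝ F] [NormedAddCommGroup G]
    [MeasurableSpace G] {μ : Measure G} (L : E →L[𝕜] E' →L[𝕜] F) {f : G → E} {g : G → E'}
    {r : ℝ} (hf : support f ⊆ closedBall 0 r) :
    tsupport (f ⋆[L, μ] g) ⊆ cthickening r (tsupport g) := by
  refine closure_minimal ((support_convolution_subset L).trans ?_) isClosed_cthickening
  rintro _ ⟨a, ha, b, hb, rfl⟩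
  refine mem_cthickening_of_dist_le _ b r _ (subset_tsupport g hb) ?_
  simpa [dist_eq_norm] using hf ha

noncomputable def mollifier (ρ : ℝ → ℝ) (ε s : ℝ) : ℝ := ε⁻¹ * ρ (ε⁻¹ * s)

section Mollifier

variable {ρ : ℝ → ℝ} {ε : ℝ}

theorem ContDiff.mollifier {n : WithTop ℕ∞} (hρ : ContDiff ℝ n ρ) :
    ContDiff ℝ n (mollifier ρ ε) :=
  contDiff_const.mul (hρ.comp (contDiff_const.mul contDiff_id))

theorem HasCompactSupport.mollifier (hρ : HasCompactSupport ρ) (hε : ε ≠ 0) :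
    HasCompactSupport (mollifier ρ ε) :=
  (hρ.comp_smul (inv_ne_zero hε)).mul_left

theorem support_mollifier_subset (hρ : support ρ ⊆ closedBall 0 1) (hε : 0 < ε) :
    support (mollifier ρ ε) ⊆ closedBall 0 ε := by
  intro s hs
  have hs₁ := hρ (right_ne_zero_of_mul hs)
  rw [mem_closedBall_zero_iff, norm_mul, norm_inv, Real.norm_of_nonneg hε.le,
    inv_mul_le_iff₀ hε, mul_one] at hs₁
  exact mem_closedBall_zero_iff.mpr hs₁

theorem mollifier_convolution_apply (g : ℝ → ℂ) (s : ℝ) :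
    (mollifier ρ ε ⋆[ContinuousLinearMap.lsmul ℝ ℝ] g) s =
      ∫ t, ((ε⁻¹ * ρ (ε⁻¹ * (s - t)) : ℝ) : ℂ) * g t := by
  simp only [convolution_eq_swap, mollifier, ContinuousLinearMap.lsmul_apply, real_smul]

end Mollifier

theorem regularized_integration_by_parts_general
    (ρ : ℝ → ℝ) (hρ : ContDiff ℝ (⊤ : ℕ∞) ρ)
    (hρsupp : tsupport ρ ⊆ Set.Icc (-1) 1)
    (ϑ : ℝ → ℝ) (hϑ : ContDiff ℝ 2 ϑ)
    (g : ℝ → ℂ) (hg : Continuous g) (hgc : HasCompactSupport g)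
    (U : Set ℝ) (hU : IsOpen U) (hgU : tsupport g ⊆ U)
    (hϑ' : ∀ s ∈ U, deriv ϑ s ≠ 0) :
    ∃ ε₀ > (0 : ℝ), ∀ ε : ℝ, 0 < ε → ε < ε₀ →
      (∫ s : ℝ, Complex.exp (Complex.I * (ϑ s : ℂ)) * g s) =
        Complex.I * (∫ s : ℝ, Complex.exp (Complex.I * (ϑ s : ℂ)) *
          deriv (fun s' : ℝ =>
            (∫ t : ℝ, ((ε⁻¹ * ρ (ε⁻¹ * (s' - t)) : ℝ) : ℂ) * g t) / ((deriv ϑ s' : ℝ) : ℂ)) s)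
        + ∫ s : ℝ, Complex.exp (Complex.I * (ϑ s : ℂ)) *
            (g s - ∫ t : ℝ, ((ε⁻¹ * ρ (ε⁻¹ * (s - t)) : ℝ) : ℂ) * g t) := by
  obtain ⟨δ, hδ, hδU⟩ := hgc.isCompact.exists_cthickening_subset_open hU hgU
  refine ⟨δ, hδ, fun ε hε hεδ => ?_⟩
  have hρc : HasCompactSupport ρ := isCompact_Icc.of_isClosed_subset (isClosed_tsupport ρ) hρsupp
  have hρ₁ : support ρ ⊆ closedBall 0 1 := by
    simpa [Real.closedBall_eq_Icc] using (subset_tsupport ρ).trans hρsupp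
  set gε := mollifier ρ ε ⋆[ContinuousLinearMap.lsmul ℝ ℝ] g
  have hgε : ContDiff ℝ 1 gε := (hρc.mollifier hε.ne').contDiff_convolution_left _
    (hρ.of_le (by exact_mod_cast le_top)).mollifier hg.locallyIntegrable
  have hgεc : HasCompactSupport gε := (hρc.mollifier hε.ne').convolution _ hgc
  have hgεU : tsupport gε ⊆ U :=
    (tsupport_convolution_subset_cthickening _ (support_mollifier_subset hρ₁ hε)).trans
      ((cthickening_mono hεδ.le _).trans hδU)
  simp_rw [← mollifier_convolution_apply]
  exact integral_exp_mul_eq_I_mul_integral_deriv_div_add hϑ hg hgc hgε hgεc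
    fun s hs => hϑ' s (hgεU hs)

/-- regularized integration by parts. -/
theorem regularized_integration_by_parts
    (ρ : ℝ → ℝ) (hρ : ContDiff ℝ (⊤ : ℕ∞) ρ)
    (hρsupp : tsupport ρ ⊆ Set.Icc (-1) 1)
    (hρint : ∫ s : ℝ, ρ s = 1)
    (ϑ : ℝ → ℝ) (hϑ : ContDiff ℝ 2 ϑ)
    (g : ℝ → ℂ) (hg : Continuous g) (hgc : HasCompactSupport g)
    (U : Set ℝ) (hU : IsOpen U) (hgU : tsupport g ⊆ U)
    (hϑ' : ∀ s ∈ U, deriv ϑ s ≠ 0) :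
    ∃ ε₀ > (0 : ℝ), ∀ ε : ℝ, 0 < ε → ε < ε₀ →
      (∫ s : ℝ, Complex.exp (Complex.I * (ϑ s : ℂ)) * g s) =
        Complex.I * (∫ s : ℝ, Complex.exp (Complex.I * (ϑ s : ℂ)) *
          deriv (fun s' : ℝ =>
            (∫ t : ℝ, ((ε⁻¹ * ρ (ε⁻¹ * (s' - t)) : ℝ) : ℂ) * g t) / ((deriv ϑ s' : ℝ) : ℂ)) s)
        + ∫ s : ℝ, Complex.exp (Complex.I * (ϑ s : ℂ)) *
            (g s - ∫ t : ℝ, ((ε⁻¹ * ρ (ε⁻¹ * (s - t)) : ℝ) : ℂ) * g t) :=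
  regularized_integration_by_parts_general ρ hρ hρsupp ϑ hϑ g hg hgc U hU hgU hϑ'
end

section
/- Let β ∈ (1/2, 1), C > 0 and 0 < ρ < 2β − 1. Then there exists b₀ > 0, depending only on β, C and ρ, with the following property: for every function ψ : [−1,1] → ℝ satisfying |ψ(τ) − ψ(τ')| ≤ C|τ − τ'|^β for all τ, τ' ∈ [−1,1], every real number b ≥ b₀, and every α ∈ ℝ with |α| ≥ b, one has |∫_{−1}^{1} exp( i b (ψ(τ) + ατ) ) dτ| < b^{−ρ}. -/
/-!
Shifting `τ` by `h = π / (b |α|)` flips the sign of the linear factor `exp (i b α τ)`.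
Writing `g = exp (i b ψ)`, twice the integral is therefore the integral of
`(g τ - g (τ - h)) exp (i b α τ)` plus two boundary pieces of length `h`. The Hölder bound gives
`|g τ - g (τ - h)| ≤ b C h ^ β`, so the integral is at most
`h + b C h ^ β ≤ π b⁻² + C π ^ β b ^ (1 - 2β)`, which is `o (b ^ (-ρ))` because `ρ < 2β - 1 < 2`.
This finite shift replaces the mollification of `g` in the paper.
-/

open MeasureTheory Complex Filter Topology Set

theorem Complex.norm_exp_I_mul_ofReal_sub_exp_I_mul_ofReal_le (x y : ℝ) :
    ‖exp (I * x) - exp (I * y)‖ ≤ |x - y| := by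
  have hsplit : exp (I * x) - exp (I * y) = exp (I * y) * (exp (I * ↑(x - y)) - 1) := by
    rw [mul_sub, mul_one, ← exp_add]
    push_cast
    ring_nf
  rw [hsplit, norm_mul, norm_exp_I_mul_ofReal, one_mul]
  exact Real.norm_exp_I_mul_ofReal_sub_one_le

theorem Complex.exp_I_mul_mul_sub_eq_neg_of_abs_mul_eq_pi {ω h : ℝ} (hωh : |ω| * h = Real.pi)
    (τ : ℝ) :
    exp (I * ω * ↑(τ - h)) = -exp (I * ω * τ) := by
  have hπ : exp (-(I * ω * h)) = -1 := by
    have hωh' : ((ω * h : ℝ) : ℂ) = Real.pi ∨ ((ω * h : ℝ) : ℂ) = -Real.pi := by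
      rcases abs_cases ω with ⟨hω, -⟩ | ⟨hω, -⟩ <;> rw [hω] at hωh
      · exact Or.inl (by rw [hωh])
      · exact Or.inr (by rw [← hωh]; push_cast; ring)
    push_cast at hωh'
    rcases hωh' with hωh' | hωh'
    · rw [mul_assoc, hωh', mul_comm, exp_neg, exp_pi_mul_I, inv_neg, inv_one]
    · rw [mul_assoc, hωh', mul_neg, neg_neg, mul_comm, exp_pi_mul_I]
  rw [ofReal_sub, mul_sub, sub_eq_add_neg, exp_add, hπ, mul_neg_one]

theorem continuousOn_of_abs_sub_le_mul_rpow {ψ : ℝ → ℝ} {s : Set ℝ} {C β : ℝ} (hβ : 0 < β)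
    (hψ : ∀ x ∈ s, ∀ y ∈ s, |ψ x - ψ y| ≤ C * |x - y| ^ β) : ContinuousOn ψ s := by
  intro x hx
  have hmod : Tendsto (fun y => C * |y - x| ^ β) (𝓝[s] x) (𝓝 0) := by
    have hcont : Continuous fun y => C * |y - x| ^ β :=
      continuous_const.mul ((continuous_id.sub continuous_const).abs.rpow_const
        fun _ => Or.inr hβ.le)
    simpa [Real.zero_rpow hβ.ne'] using (hcont.tendsto x).mono_left nhdsWithin_le_nhds
  rw [ContinuousWithinAt, tendsto_iff_norm_sub_tendsto_zero]
  exact squeeze_zero' (Eventually.of_forall fun _ => norm_nonneg _)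
    (eventually_nhdsWithin_of_forall fun y hy => hψ y hy x hx) hmod

theorem eventually_mul_rpow_add_mul_rpow_lt_rpow {p q r : ℝ} (hp : p < r) (hq : q < r)
    (A B : ℝ) : ∀ᶠ b in atTop, A * b ^ p + B * b ^ q < b ^ r := by
  have hlim : Tendsto (fun b : ℝ => A * b ^ (p - r) + B * b ^ (q - r)) atTop (𝓝 0) := by
    have hp' := tendsto_rpow_neg_atTop (y := r - p) (by linarith)
    have hq' := tendsto_rpow_neg_atTop (y := r - q) (by linarith)
    simpa [neg_sub] using (hp'.const_mul A).add (hq'.const_mul B)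
  filter_upwards [hlim.eventually_lt_const one_pos, eventually_gt_atTop 0] with b hb hb0
  have hsplit : A * b ^ p + B * b ^ q = (A * b ^ (p - r) + B * b ^ (q - r)) * b ^ r := by
    rw [add_mul, mul_assoc, mul_assoc, ← Real.rpow_add hb0, ← Real.rpow_add hb0]
    ring_nf
  rw [hsplit]
  exact mul_lt_of_lt_one_left (Real.rpow_pos_of_pos hb0 r) hb

theorem two_smul_intervalIntegral_eq_of_apply_sub_eq_neg {E : Type*} [NormedAddCommGroup E]
    [NormedSpace ℝ E] {f F : ℝ → E} {a b h : ℝ} (hh : 0 ≤ h) (hhab : h ≤ b - a)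
    (hfF : ∀ τ, f (τ - h) = -F τ) (hf : IntervalIntegrable f volume a b) :
    (2 : ℝ) • ∫ τ in a..b, f τ =
      (∫ τ in a..a + h, f τ) + (∫ τ in a + h..b, f τ - F τ) - ∫ τ in b..b + h, F τ := by
  have hFf : F = fun τ => -f (τ - h) := funext fun τ => by rw [hfF, neg_neg]
  have hF : IntervalIntegrable F volume (a + h) (b + h) := hFf ▸ (hf.comp_sub_right h).neg
  have hshift : ∫ τ in a + h..b + h, F τ = -∫ τ in a..b, f τ := by
    rw [hFf, intervalIntegral.integral_neg, intervalIntegral.integral_comp_sub_right,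
      add_sub_cancel_right, add_sub_cancel_right]
  have hmem : a + h ∈ uIcc a b := by
    rw [uIcc_of_le (by linarith)]; constructor <;> linarith
  have hmem' : b ∈ uIcc (a + h) (b + h) := by
    rw [uIcc_of_le (by linarith)]; constructor <;> linarith
  have hf₁ := hf.mono_set (uIcc_subset_uIcc left_mem_uIcc hmem)
  have hf₂ := hf.mono_set (uIcc_subset_uIcc hmem right_mem_uIcc)
  have hF₁ := hF.mono_set (uIcc_subset_uIcc left_mem_uIcc hmem')
  have hF₂ := hF.mono_set (uIcc_subset_uIcc hmem' right_mem_uIcc)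
  have hsplit := intervalIntegral.integral_add_adjacent_intervals hf₁ hf₂
  have hsplit' := intervalIntegral.integral_add_adjacent_intervals hF₁ hF₂
  rw [intervalIntegral.integral_sub hf₂ hF₁]
  linear_combination (norm := module) hsplit' + hshift - hsplit

theorem norm_intervalIntegral_mul_exp_I_mul_le {g : ℝ → ℂ} {a b ω h M ε : ℝ}
    (hωh : |ω| * h = Real.pi) (hhab : h ≤ b - a) (hg : IntervalIntegrable g volume a b)
    (hgM : ∀ τ ∈ Icc a b, ‖g τ‖ ≤ M) (hgε : ∀ τ ∈ Icc (a + h) b, ‖g τ - g (τ - h)‖ ≤ ε) :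
    ‖∫ τ in a..b, g τ * exp (I * ω * τ)‖ ≤ M * h + (b - a) * ε / 2 := by
  have hh : 0 < h := pos_of_mul_pos_right (hωh ▸ Real.pi_pos) (abs_nonneg ω)
  have hε : 0 ≤ ε := (norm_nonneg _).trans (hgε b ⟨by linarith, le_rfl⟩)
  have he : ∀ τ : ℝ, ‖exp (I * ω * τ)‖ = 1 := fun τ => by
    rw [mul_assoc, ← ofReal_mul, norm_exp_I_mul_ofReal]
  have hcont : Continuous fun τ : ℝ => exp (I * ω * τ) := by fun_prop
  have htwo := two_smul_intervalIntegral_eq_of_apply_sub_eq_neg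
    (F := fun τ => g (τ - h) * exp (I * ω * τ)) hh.le hhab
    (fun τ => by rw [exp_I_mul_mul_sub_eq_neg_of_abs_mul_eq_pi hωh, mul_neg])
    (hg.mul_continuousOn hcont.continuousOn)
  have hleft : ‖∫ τ in a..a + h, g τ * exp (I * ω * τ)‖ ≤ M * h := by
    refine (intervalIntegral.norm_integral_le_of_norm_le_const fun τ hτ => ?_).trans_eq
      (by rw [add_sub_cancel_left, abs_of_pos hh])
    rw [uIoc_of_le (by linarith)] at hτ
    rw [norm_mul, he, mul_one]
    exact hgM τ ⟨hτ.1.le, by linarith [hτ.2]⟩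
  have hright : ‖∫ τ in b..b + h, g (τ - h) * exp (I * ω * τ)‖ ≤ M * h := by
    refine (intervalIntegral.norm_integral_le_of_norm_le_const fun τ hτ => ?_).trans_eq
      (by rw [add_sub_cancel_left, abs_of_pos hh])
    rw [uIoc_of_le (by linarith)] at hτ
    rw [norm_mul, he, mul_one]
    exact hgM (τ - h) ⟨by linarith [hτ.1], by linarith [hτ.2]⟩
  have hmiddle : ‖∫ τ in a + h..b, g τ * exp (I * ω * τ) - g (τ - h) * exp (I * ω * τ)‖ ≤
      ε * (b - a) := by
    refine (intervalIntegral.norm_integral_le_of_norm_le_const fun τ hτ => ?_).trans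
      (mul_le_mul_of_nonneg_left ?_ hε)
    · rw [uIoc_of_le (by linarith)] at hτ
      rw [← sub_mul, norm_mul, he, mul_one]
      exact hgε τ ⟨hτ.1.le, hτ.2⟩
    · rw [abs_of_nonneg (by linarith)]
      linarith
  have htriangle := norm_sub_le_of_le (norm_add_le_of_le hleft hmiddle) hright
  rw [← htwo, norm_smul, Real.norm_two] at htriangle
  linarith

theorem norm_integral_exp_I_mul_holder_add_linear_le {ψ : ℝ → ℝ} {β C b α : ℝ} (hβ : 0 < β)
    (hψ : ∀ τ ∈ Icc (-1 : ℝ) 1, ∀ τ' ∈ Icc (-1 : ℝ) 1, |ψ τ - ψ τ'| ≤ C * |τ - τ'| ^ β)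
    (hb : 0 < b) (hα : Real.pi ≤ 2 * (b * |α|)) :
    ‖∫ τ in (-1 : ℝ)..1, exp (I * b * ((ψ τ + α * τ : ℝ) : ℂ))‖ ≤
      Real.pi / (b * |α|) + b * C * (Real.pi / (b * |α|)) ^ β := by
  set h := Real.pi / (b * |α|)
  have hbα : 0 < b * |α| := pos_of_mul_pos_right (Real.pi_pos.trans_le hα) zero_le_two
  have hωh : |b * α| * h = Real.pi := by
    rw [abs_mul, abs_of_pos hb, mul_div_cancel₀ _ hbα.ne']
  have hh : 0 < h := by positivity
  have hcont : ContinuousOn (fun τ => exp (I * ↑(b * ψ τ))) (uIcc (-1) 1) := by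
    rw [uIcc_of_le (by norm_num)]
    have := continuousOn_of_abs_sub_le_mul_rpow hβ hψ
    fun_prop
  have hintegrand : (fun τ : ℝ => exp (I * b * ((ψ τ + α * τ : ℝ) : ℂ))) =
      fun τ => exp (I * ↑(b * ψ τ)) * exp (I * ↑(b * α) * τ) := by
    ext τ
    rw [← exp_add]
    push_cast
    ring_nf
  have hbound := norm_intervalIntegral_mul_exp_I_mul_le (M := 1) (ε := b * C * h ^ β) hωh
    (by rw [div_le_iff₀ hbα]; linarith) hcont.intervalIntegrable
    (fun τ _ => (norm_exp_I_mul_ofReal _).le) fun τ hτ => ?_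
  · rw [hintegrand]
    exact hbound.trans_eq (by ring)
  calc ‖exp (I * ↑(b * ψ τ)) - exp (I * ↑(b * ψ (τ - h)))‖
      ≤ |b * ψ τ - b * ψ (τ - h)| := norm_exp_I_mul_ofReal_sub_exp_I_mul_ofReal_le _ _
    _ = b * |ψ τ - ψ (τ - h)| := by rw [← mul_sub, abs_mul, abs_of_pos hb]
    _ ≤ b * (C * |τ - (τ - h)| ^ β) := by
      gcongr
      exact hψ _ ⟨by linarith [hτ.1], hτ.2⟩ _ ⟨by linarith [hτ.1], by linarith [hτ.2]⟩
    _ = b * C * h ^ β := by rw [sub_sub_cancel, abs_of_pos hh, mul_assoc]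

theorem norm_integral_exp_I_mul_holder_add_linear_le_rpow {ψ : ℝ → ℝ} {β C b α : ℝ}
    (hβ : 0 < β) (hC : 0 ≤ C)
    (hψ : ∀ τ ∈ Icc (-1 : ℝ) 1, ∀ τ' ∈ Icc (-1 : ℝ) 1, |ψ τ - ψ τ'| ≤ C * |τ - τ'| ^ β)
    (hb : 2 ≤ b) (hα : b ≤ |α|) :
    ‖∫ τ in (-1 : ℝ)..1, exp (I * b * ((ψ τ + α * τ : ℝ) : ℂ))‖ ≤
      Real.pi * b ^ (-2 : ℝ) + C * Real.pi ^ β * b ^ (1 - 2 * β) := by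
  have hb0 : 0 < b := by linarith
  have hh : Real.pi / (b * |α|) ≤ Real.pi * b ^ (-2 : ℝ) := by
    rw [Real.rpow_neg hb0.le, Real.rpow_two, ← div_eq_mul_inv]
    gcongr
    nlinarith
  refine (norm_integral_exp_I_mul_holder_add_linear_le hβ hψ hb0 ?_).trans (add_le_add hh ?_)
  · nlinarith [Real.pi_le_four]
  calc b * C * (Real.pi / (b * |α|)) ^ β ≤ b * C * (Real.pi * b ^ (-2 : ℝ)) ^ β := by gcongr
    _ = C * Real.pi ^ β * b ^ (1 - 2 * β) := by
      rw [Real.mul_rpow Real.pi_pos.le (by positivity), ← Real.rpow_mul hb0.le,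
        sub_eq_add_neg, Real.rpow_add hb0, Real.rpow_one]
      ring_nf

theorem oscillatory_integral_large_linear_phase_general
    (β C ρ : ℝ) (hβ : 1 / 2 < β) (hβ1 : β < 1) (hC : 0 < C)
    (hρ : ρ < 2 * β - 1) :
    ∃ b₀ : ℝ, 0 < b₀ ∧
      ∀ ψ : ℝ → ℝ,
        (∀ τ ∈ Set.Icc (-1 : ℝ) 1, ∀ τ' ∈ Set.Icc (-1 : ℝ) 1,
          |ψ τ - ψ τ'| ≤ C * |τ - τ'| ^ β) →
        ∀ b : ℝ, b₀ ≤ b → ∀ α : ℝ, b ≤ |α| →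
          ‖(∫ τ in (-1 : ℝ)..1,
              Complex.exp (Complex.I * (b : ℂ) * ((ψ τ + α * τ : ℝ) : ℂ)))‖
            < b ^ (-ρ) := by
  obtain ⟨N, hN⟩ := eventually_atTop.1 <|
    (eventually_mul_rpow_add_mul_rpow_lt_rpow (p := -2) (q := 1 - 2 * β) (r := -ρ)
      (by linarith) (by linarith) Real.pi (C * Real.pi ^ β)).and (eventually_ge_atTop 2)
  refine ⟨max N 1, by positivity, fun ψ hψ b hb α hα => ?_⟩
  obtain ⟨hlt, hb2⟩ := hN b (le_of_max_le_left hb)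
  exact (norm_integral_exp_I_mul_holder_add_linear_le_rpow (by linarith) hC.le hψ hb2 hα).trans_lt
    hlt

theorem oscillatory_integral_large_linear_phase
    (β C ρ : ℝ) (hβ : 1 / 2 < β) (hβ1 : β < 1) (hC : 0 < C)
    (hρ0 : 0 < ρ) (hρ : ρ < 2 * β - 1) :
    ∃ b₀ : ℝ, 0 < b₀ ∧
      ∀ ψ : ℝ → ℝ,
        (∀ τ ∈ Set.Icc (-1 : ℝ) 1, ∀ τ' ∈ Set.Icc (-1 : ℝ) 1,
          |ψ τ - ψ τ'| ≤ C * |τ - τ'| ^ β) →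
        ∀ b : ℝ, b₀ ≤ b → ∀ α : ℝ, b ≤ |α| →
          ‖(∫ τ in (-1 : ℝ)..1,
              Complex.exp (Complex.I * (b : ℂ) * ((ψ τ + α * τ : ℝ) : ℂ)))‖
            < b ^ (-ρ) :=
  oscillatory_integral_large_linear_phase_general β C ρ hβ hβ1 hC hρ
end

section
/- Let (a_i)_{i≥1} be real numbers with 0 < |a_i| ≤ 1/2 for all i, and set A_0 = 1 and A_i = a_1 a_2 ⋯ a_i for i ≥ 1. Let (φ_i)_{i≥0} be continuous functions from [−1,1] to ℝ with ‖φ_i‖_∞ ≤ C for all i. For each j ≥ 0 define g_j : [−1,1] → ℝ by g_j(τ) = − Σ_{i=j}^{∞} (A_{i+1}/A_j) · φ_i( (A_{i+1}/A_j) τ ). Then each series converges absolutely and uniformly, each g_j is continuous with ‖g_j‖_∞ ≤ C, and the family satisfies the recursion g_j(τ) = a_{j+1} · g_{j+1}(a_{j+1} τ) − a_{j+1} · φ_j(a_{j+1} τ) for every j ≥ 0 and τ ∈ [−1,1]. -/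
/-!
The coefficient `A_{i+1}/A_j` is the tail product `a_{j+1} ⋯ a_{i+1}`, of modulus at most
`2^{-(i-j+1)}`; hence it maps `[-1,1]` into itself and the `k`-th term of the series for `g_j` is
bounded by `C / 2^{k+1}`.  The Weierstrass M-test then gives absolute and uniform convergence,
continuity, and `|g_j| ≤ C · Σ 2^{-(k+1)} = C`.  The recursion is obtained by splitting off the
first term: the tail product starting at `j` is `a_{j+1}` times the one starting at `j + 1`.
With `a j` standing for `a_{j+1}`, `tailProd a j k` is `A_{j+k+1}/A_j`.
-/

open Filter Finset

def tailProd (a : ℕ → ℝ) (j k : ℕ) : ℝ := ∏ i ∈ range (k + 1), a (j + i)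

lemma tailProd_zero (a : ℕ → ℝ) (j : ℕ) : tailProd a j 0 = a j := by
  simp [tailProd]

lemma tailProd_succ (a : ℕ → ℝ) (j k : ℕ) :
    tailProd a j (k + 1) = a j * tailProd a (j + 1) k := by
  rw [tailProd, prod_range_succ', mul_comm, tailProd]
  simp only [add_zero, add_assoc, add_comm 1]

lemma div_prod_range_eq_tailProd {a : ℕ → ℝ} (ha : ∀ i, a i ≠ 0) (j k : ℕ) :
    (∏ i ∈ range (j + k + 1), a i) / ∏ i ∈ range j, a i = tailProd a j k := by
  rw [add_assoc, prod_range_add, mul_div_cancel_left₀ _ (prod_ne_zero_iff.mpr fun i _ => ha i),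
    tailProd]

lemma abs_tailProd_le {a : ℕ → ℝ} {q : ℝ} (ha : ∀ i, |a i| ≤ q) (j k : ℕ) :
    |tailProd a j k| ≤ q ^ (k + 1) := by
  rw [tailProd, abs_prod]
  calc ∏ i ∈ range (k + 1), |a (j + i)| ≤ ∏ _i ∈ range (k + 1), q :=
        prod_le_prod (fun i _ => abs_nonneg _) (fun i _ => ha _)
    _ = q ^ (k + 1) := by rw [prod_const, card_range]

lemma mul_mem_Icc_neg_one_one {c τ : ℝ} (hc : |c| ≤ 1) (hτ : τ ∈ Set.Icc (-1 : ℝ) 1) :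
    c * τ ∈ Set.Icc (-1 : ℝ) 1 := by
  rw [Set.mem_Icc, ← abs_le] at hτ ⊢
  rw [abs_mul]
  exact mul_le_one₀ hc (abs_nonneg τ) hτ

section ScaledSeries

variable {C : ℝ} {c : ℕ → ℝ} {ψ : ℕ → ℝ → ℝ}

lemma scaled_mem_Icc (hc : ∀ k, |c k| ≤ (1 / 2) ^ (k + 1)) (k : ℕ) {τ : ℝ}
    (hτ : τ ∈ Set.Icc (-1 : ℝ) 1) : c k * τ ∈ Set.Icc (-1 : ℝ) 1 :=
  mul_mem_Icc_neg_one_one ((hc k).trans (pow_le_one₀ (by norm_num) (by norm_num))) hτ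

lemma abs_scaled_term_le (hc : ∀ k, |c k| ≤ (1 / 2) ^ (k + 1))
    (hψ : ∀ k, ∀ τ ∈ Set.Icc (-1 : ℝ) 1, |ψ k τ| ≤ C) (k : ℕ) {τ : ℝ}
    (hτ : τ ∈ Set.Icc (-1 : ℝ) 1) : |c k * ψ k (c k * τ)| ≤ C / 2 / 2 ^ k := by
  have hC : 0 ≤ C := (abs_nonneg _).trans (hψ 0 0 (by norm_num))
  calc |c k * ψ k (c k * τ)| = |c k| * |ψ k (c k * τ)| := abs_mul _ _
    _ ≤ (1 / 2) ^ (k + 1) * C :=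
        mul_le_mul (hc k) (hψ k _ (scaled_mem_Icc hc k hτ)) (abs_nonneg _) (by positivity)
    _ = C / 2 / 2 ^ k := by rw [pow_succ, one_div_pow]; ring

lemma summable_abs_scaled_term (hc : ∀ k, |c k| ≤ (1 / 2) ^ (k + 1))
    (hψ : ∀ k, ∀ τ ∈ Set.Icc (-1 : ℝ) 1, |ψ k τ| ≤ C) {τ : ℝ}
    (hτ : τ ∈ Set.Icc (-1 : ℝ) 1) : Summable fun k => |c k * ψ k (c k * τ)| :=
  (hasSum_geometric_two' C).summable.of_nonneg_of_le (fun _ => abs_nonneg _)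
    fun k => abs_scaled_term_le hc hψ k hτ

lemma tendstoUniformlyOn_scaled_series (hc : ∀ k, |c k| ≤ (1 / 2) ^ (k + 1))
    (hψ : ∀ k, ∀ τ ∈ Set.Icc (-1 : ℝ) 1, |ψ k τ| ≤ C) :
    TendstoUniformlyOn (fun N τ => ∑ k ∈ range N, c k * ψ k (c k * τ))
      (fun τ => ∑' k, c k * ψ k (c k * τ)) atTop (Set.Icc (-1) 1) :=
  tendstoUniformlyOn_tsum_nat (hasSum_geometric_two' C).summable
    fun k _ hτ => abs_scaled_term_le hc hψ k hτ

lemma continuousOn_scaled_series (hc : ∀ k, |c k| ≤ (1 / 2) ^ (k + 1))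
    (hψ : ∀ k, ∀ τ ∈ Set.Icc (-1 : ℝ) 1, |ψ k τ| ≤ C)
    (hψc : ∀ k, ContinuousOn (ψ k) (Set.Icc (-1) 1)) :
    ContinuousOn (fun τ => ∑' k, c k * ψ k (c k * τ)) (Set.Icc (-1) 1) :=
  continuousOn_tsum
    (fun k => continuousOn_const.mul <|
      (hψc k).comp (continuous_const_mul _).continuousOn fun _ hτ => scaled_mem_Icc hc k hτ)
    (hasSum_geometric_two' C).summable fun k _ hτ => abs_scaled_term_le hc hψ k hτ

lemma abs_scaled_series_le (hc : ∀ k, |c k| ≤ (1 / 2) ^ (k + 1))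
    (hψ : ∀ k, ∀ τ ∈ Set.Icc (-1 : ℝ) 1, |ψ k τ| ≤ C) {τ : ℝ}
    (hτ : τ ∈ Set.Icc (-1 : ℝ) 1) : |∑' k, c k * ψ k (c k * τ)| ≤ C := by
  rw [← Real.norm_eq_abs]
  exact tsum_of_norm_bounded (hasSum_geometric_two' C) fun k => abs_scaled_term_le hc hψ k hτ

end ScaledSeries

lemma tsum_tailProd_eq_zero_add (a : ℕ → ℝ) (φ : ℕ → ℝ → ℝ) (j : ℕ) (τ : ℝ)
    (hs : Summable fun k => tailProd a j k * φ (j + k) (tailProd a j k * τ)) :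
    ∑' k, tailProd a j k * φ (j + k) (tailProd a j k * τ) =
      a j * φ j (a j * τ) +
        a j * ∑' k, tailProd a (j + 1) k * φ (j + 1 + k) (tailProd a (j + 1) k * (a j * τ)) := by
  rw [hs.tsum_eq_zero_add, ← tsum_mul_left, tailProd_zero, add_zero]
  congr 1
  refine tsum_congr fun k => ?_
  rw [tailProd_succ, ← add_assoc, add_right_comm]
  ring_nf

theorem straight_section_series_converse
    (a : ℕ → ℝ) (ha0 : ∀ i, a i ≠ 0) (ha : ∀ i, |a i| ≤ 1 / 2)
    (C : ℝ) (φ : ℕ → ℝ → ℝ)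
    (hφc : ∀ i, ContinuousOn (φ i) (Set.Icc (-1) 1))
    (hφb : ∀ i : ℕ, ∀ τ ∈ Set.Icc (-1 : ℝ) 1, |φ i τ| ≤ C)
    (A : ℕ → ℝ) (hA : ∀ i, A i = ∏ j ∈ Finset.range i, a j)
    (g : ℕ → ℝ → ℝ)
    (hg : ∀ (j : ℕ) (τ : ℝ),
      g j τ = - ∑' k : ℕ, (A (j + k + 1) / A j) * φ (j + k) ((A (j + k + 1) / A j) * τ)) :
    (∀ j : ℕ, ∀ τ ∈ Set.Icc (-1 : ℝ) 1,
      Summable (fun k : ℕ => |(A (j + k + 1) / A j) * φ (j + k) ((A (j + k + 1) / A j) * τ)|)) ∧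
    (∀ j : ℕ, TendstoUniformlyOn
      (fun (N : ℕ) (τ : ℝ) =>
        - ∑ k ∈ Finset.range N, (A (j + k + 1) / A j) * φ (j + k) ((A (j + k + 1) / A j) * τ))
      (g j) atTop (Set.Icc (-1) 1)) ∧
    (∀ j : ℕ, ContinuousOn (g j) (Set.Icc (-1) 1)) ∧
    (∀ j : ℕ, ∀ τ ∈ Set.Icc (-1 : ℝ) 1, |g j τ| ≤ C) ∧
    (∀ j : ℕ, ∀ τ ∈ Set.Icc (-1 : ℝ) 1,
      g j τ = a j * g (j + 1) (a j * τ) - a j * φ j (a j * τ)) := by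
  have hr : ∀ j k, A (j + k + 1) / A j = tailProd a j k := fun j k => by
    rw [hA, hA, div_prod_range_eq_tailProd ha0]
  simp only [hr] at hg ⊢
  have hgj : ∀ j, g j = -fun τ => ∑' k, tailProd a j k * φ (j + k) (tailProd a j k * τ) :=
    fun j => funext (hg j)
  have hc : ∀ j k, |tailProd a j k| ≤ (1 / 2) ^ (k + 1) := abs_tailProd_le ha
  have hψ : ∀ j k, ∀ τ ∈ Set.Icc (-1 : ℝ) 1, |φ (j + k) τ| ≤ C := fun j k => hφb (j + k)
  refine ⟨fun j τ hτ => summable_abs_scaled_term (hc j) (hψ j) hτ,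
    fun j => hgj j ▸ (tendstoUniformlyOn_scaled_series (hc j) (hψ j)).neg,
    fun j => hgj j ▸ (continuousOn_scaled_series (hc j) (hψ j) fun k => hφc (j + k)).neg,
    fun j τ hτ => by rw [hg, abs_neg]; exact abs_scaled_series_le (hc j) (hψ j) hτ,
    fun j τ hτ => ?_⟩
  rw [hg, hg, tsum_tailProd_eq_zero_add a φ j τ
    (summable_abs_scaled_term (hc j) (hψ j) hτ).of_abs]
  ring
end

section
/- Let n ≥ 1, let A be a diagonal n×n real matrix whose diagonal entries a_1,…,a_n satisfy |a_j| ≥ c for some c > 0, and let 0 ≤ ε < c. Let K ⊆ ℝⁿ be a convex set and let F : K → ℝⁿ be differentiable at every point of K with ‖DF(x) − A‖ ≤ ε for all x ∈ K, where ‖·‖ is the operator norm with respect to the sup-norm ‖v‖_max = max_j |v_j| on ℝⁿ. Then ‖F(x) − F(y)‖_max ≥ (c − ε) ‖x − y‖_max for all x, y ∈ K; in particular F is injective on K. -/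
/-!
Quantitative injectivity: if `F : K → ℝⁿ` (with `ℝⁿ = Fin n → ℝ` carrying the sup-norm) is
differentiable on a convex set `K` with `‖DF(x) − A‖ ≤ ε` for a diagonal matrix `A` whose
diagonal entries have absolute value `≥ c > ε`, then
`‖F(x) − F(y)‖ ≥ (c − ε)‖x − y‖` on `K`; in particular `F` is injective on `K`.
-/

noncomputable section

lemma diag_lower_bound (n : ℕ) (hn : 1 ≤ n) (a : Fin n → ℝ) (c : ℝ)
    (ha : ∀ j, c ≤ |a j|) (hc : 0 < c) (v : Fin n → ℝ) :
    c * ‖v‖ ≤ ‖(Matrix.diagonal a).mulVecLin v‖ := by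
  have : Nonempty (Fin n) := ⟨⟨0, hn⟩⟩
  obtain ⟨j, -, hj⟩ := Finset.exists_mem_eq_sup Finset.univ Finset.univ_nonempty
    (fun i => ‖v i‖₊)
  have hvj : ‖v‖ = |v j| := by rw [Pi.norm_def, hj]; simp [Real.norm_eq_abs]
  have h1 : |((Matrix.diagonal a).mulVecLin v) j| ≤ ‖(Matrix.diagonal a).mulVecLin v‖ := by
    simpa [Real.norm_eq_abs] using norm_le_pi_norm ((Matrix.diagonal a).mulVecLin v) j
  have h2 : ((Matrix.diagonal a).mulVecLin v) j = a j * v j := by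
    simp [Matrix.mulVecLin_apply, Matrix.mulVec_diagonal]
  calc c * ‖v‖ = c * |v j| := by rw [hvj]
    _ ≤ |a j| * |v j| := by
        exact mul_le_mul_of_nonneg_right (ha j) (abs_nonneg _)
    _ = |a j * v j| := (abs_mul _ _).symm
    _ ≤ _ := by rw [← h2]; exact h1

/-- Here `Fin n → ℝ` carries the sup-norm, and the diagonal matrix `A`
acts via `(Matrix.diagonal a).mulVecLin`. -/
theorem expansion_near_diagonal_injective
    (n : ℕ) (hn : 1 ≤ n) (a : Fin n → ℝ) (c : ℝ) (hc : 0 < c)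
    (ha : ∀ j, c ≤ |a j|) (ε : ℝ) (hε0 : 0 ≤ ε) (hεc : ε < c)
    (K : Set (Fin n → ℝ)) (hK : Convex ℝ K)
    (F : (Fin n → ℝ) → (Fin n → ℝ))
    (F' : (Fin n → ℝ) → (Fin n → ℝ) →L[ℝ] (Fin n → ℝ))
    (hF : ∀ x ∈ K, HasFDerivWithinAt F (F' x) K x)
    (hF' : ∀ x ∈ K,
      ‖F' x - LinearMap.toContinuousLinearMap (Matrix.mulVecLin (Matrix.diagonal a))‖ ≤ ε) :
    (∀ x ∈ K, ∀ y ∈ K, (c - ε) * ‖x - y‖ ≤ ‖F x - F y‖) ∧ Set.InjOn F K := by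
  set L := LinearMap.toContinuousLinearMap (Matrix.mulVecLin (Matrix.diagonal a)) with hL
  have key : ∀ x ∈ K, ∀ y ∈ K, (c - ε) * ‖x - y‖ ≤ ‖F x - F y‖ := by
    intro x hx y hy
    have hG : ∀ z ∈ K, HasFDerivWithinAt (fun w => F w - L w) (F' z - L) K z := by
      intro z hz
      exact (hF z hz).sub (L.hasFDerivAt.hasFDerivWithinAt)
    have hbound := hK.norm_image_sub_le_of_norm_hasFDerivWithin_le hG
      (fun z hz => hF' z hz) hy hx
    -- hbound : ‖(F x - L x) - (F y - L y)‖ ≤ ε * ‖x - y‖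
    have hlow : c * ‖x - y‖ ≤ ‖L (x - y)‖ := diag_lower_bound n hn a c ha hc (x - y)
    set u := (F x - L x) - (F y - L y) with hu
    have hdecomp : F x - F y = u + L (x - y) := by
      simp only [hu, map_sub]; abel
    have htri : ‖L (x - y)‖ ≤ ‖F x - F y‖ + ‖u‖ := by
      have h1 : ‖L (x - y)‖ = ‖(u + L (x - y)) - u‖ := by congr 1; abel
      rw [h1, hdecomp]
      exact norm_sub_le _ _
    have hub : ‖u‖ ≤ ε * ‖x - y‖ := hbound
    nlinarith [norm_nonneg (x - y)]
  refine ⟨key, ?_⟩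
  intro x hx y hy hxy
  have := key x hx y hy
  rw [hxy, sub_self, norm_zero] at this
  have h1 : ‖x - y‖ ≤ 0 := by nlinarith [norm_nonneg (x - y)]
  have : x - y = 0 := by
    have := le_antisymm h1 (norm_nonneg _)
    exact norm_eq_zero.mp this
  exact sub_eq_zero.mp this
end
end
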